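/- arXiv:2408.11600 — 5 statements merged into one kernel-verified Lean document; each statement's English description precedes it below -/
import Mathlib

section
/- Let m ≥ 1 and n ≥ 1 be integers, and let (Z, w) be any feasible point of the OPA linear program (the sign of Z is not restricted). Then for every 1 ≤ k ≤ m and 1 ≤ r ≤ n, the weight satisfies the lower bound w_{k,r} ≥ (Z/k) · Σ_{h=r}^{n} (1/h). -/
/-- Feasibility predicate for the OPA linear program with `m` experts and `n` criteria:
`w k r` is the weight expert `k` assigns to the criterion ranked in position `r`. -/
def OPAFeasible (m n : ℕ) (Z : ℝ) (w : ℕ → ℕ → ℝ) : Prop :=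
  (∀ k ∈ Finset.Icc 1 m, ∀ r ∈ Finset.Icc 1 n, 0 ≤ w k r) ∧
  (∀ k ∈ Finset.Icc 1 m, ∀ r ∈ Finset.Icc 1 (n - 1),
      (k : ℝ) * r * (w k r - w k (r + 1)) ≥ Z) ∧
  (∀ k ∈ Finset.Icc 1 m, (k : ℝ) * n * w k n ≥ Z) ∧
  (∑ k ∈ Finset.Icc 1 m, ∑ r ∈ Finset.Icc 1 n, w k r = 1)

/-- The optimal value `Z*` of the OPA linear program: the supremum of `Z` over feasible points. -/
noncomputable def OPAOptimal (m n : ℕ) : ℝ :=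
  sSup {Z : ℝ | ∃ w : ℕ → ℕ → ℝ, OPAFeasible m n Z w}

/-- At any feasible point of the OPA linear program, the weight `w k r` is bounded
below by `(Z/k) * Σ_{h=r}^{n} (1/h)`. -/
theorem opa_weight_lower_bound (m n : ℕ) (hm : 1 ≤ m) (hn : 1 ≤ n)
    (Z : ℝ) (w : ℕ → ℕ → ℝ) (hfeas : OPAFeasible m n Z w) :
    ∀ k ∈ Finset.Icc 1 m, ∀ r ∈ Finset.Icc 1 n,
      (Z / (k : ℝ)) * ∑ h ∈ Finset.Icc r n, (1 : ℝ) / h ≤ w k r := by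

  obtain ⟨hpos, hmid, hlast, hsum⟩ := hfeas
  intro k hk r hr
  simp only [Finset.mem_Icc] at hk hr
  have hk0 : (0:ℝ) < (k:ℝ) := by exact_mod_cast hk.1
  -- downward induction via d = n - r
  suffices H : ∀ d r, 1 ≤ r → r ≤ n → n - r = d →
      (Z / (k : ℝ)) * ∑ h ∈ Finset.Icc r n, (1 : ℝ) / h ≤ w k r by
    exact H (n - r) r hr.1 hr.2 rfl
  intro d
  induction d with
  | zero =>
    intro r hr1 hrn hd
    have hrn' : r = n := by omega
    subst hrn'
    rw [Finset.Icc_self, Finset.sum_singleton]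
    have hr0 : (0:ℝ) < (r:ℝ) := by exact_mod_cast hr1
    have h := hlast k (by simp [Finset.mem_Icc]; omega)
    rw [div_mul_div_comm]
    rw [div_le_iff₀ (by positivity)]
    calc Z * 1 = Z := by ring
    _ ≤ (k : ℝ) * r * w k r := h
    _ = w k r * ((k:ℝ) * r) := by ring
  | succ d ih =>
    intro r hr1 hrn hd
    have hrn' : r < n := by omega
    have hr0 : (0:ℝ) < (r:ℝ) := by exact_mod_cast hr1
    have hIH := ih (r+1) (by omega) (by omega) (by omega)
    have hcon := hmid k (by simp [Finset.mem_Icc]; omega) r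
      (by simp [Finset.mem_Icc]; omega)
    have hsplit : Finset.Icc r n = insert r (Finset.Icc (r+1) n) := by
      ext x; simp [Finset.mem_Icc]; omega
    rw [hsplit, Finset.sum_insert (by simp)]
    have hw : w k (r+1) + Z / ((k:ℝ) * r) ≤ w k r := by
      have : Z / ((k:ℝ) * r) ≤ w k r - w k (r+1) := by
        rw [div_le_iff₀ (by positivity)]
        calc Z ≤ (k : ℝ) * r * (w k r - w k (r + 1)) := hcon
        _ = (w k r - w k (r+1)) * ((k:ℝ)*r) := by ring
      linarith
    have : Z / (k:ℝ) * (1/(r:ℝ)) = Z / ((k:ℝ)*r) := by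
      field_simp
    calc Z / (k:ℝ) * ((1:ℝ)/r + ∑ h ∈ Finset.Icc (r+1) n, (1:ℝ)/h)
        = Z / ((k:ℝ)*r) + Z / (k:ℝ) * ∑ h ∈ Finset.Icc (r+1) n, (1:ℝ)/h := by
          rw [mul_add, this]
      _ ≤ Z / ((k:ℝ)*r) + w k (r+1) := by linarith
      _ ≤ w k r := by linarith
end

section
/- Let m ≥ 1 and n ≥ 1 be integers. Every feasible point (Z, w) of the OPA linear program satisfies Z ≤ 1 / (n · Σ_{k=1}^{m} 1/k). In particular, the optimal value Z* of the OPA linear program is at most 1 / (n · Σ_{k=1}^{m} 1/k). -/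
lemma abel_sum (n : ℕ) (hn : 1 ≤ n) (f : ℕ → ℝ) :
    ∑ r ∈ Finset.Icc 1 n, f r
      = ∑ r ∈ Finset.Icc 1 (n - 1), (r : ℝ) * (f r - f (r + 1)) + (n : ℝ) * f n := by
  induction n with
  | zero => omega
  | succ n ih =>
    rcases Nat.eq_or_lt_of_le hn with h | h
    · simp [← h]
    · have hn1 : 1 ≤ n := by omega
      obtain ⟨p, rfl⟩ : ∃ p, n = p + 1 := ⟨n - 1, by omega⟩
      rw [Finset.sum_Icc_succ_top (by omega : 1 ≤ p + 1 + 1), ih hn1]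
      simp only [Nat.add_sub_cancel]
      rw [Finset.sum_Icc_succ_top (by omega : 1 ≤ p + 1)]
      push_cast
      ring


/-- Every feasible `Z` of the OPA linear program satisfies
`Z ≤ 1 / (n * Σ_{k=1}^{m} 1/k)`; hence the optimal value is at most this bound. -/
theorem opa_upper_bound (m n : ℕ) (hm : 1 ≤ m) (hn : 1 ≤ n) :
    (∀ (Z : ℝ) (w : ℕ → ℕ → ℝ), OPAFeasible m n Z w →
      Z ≤ 1 / ((n : ℝ) * ∑ k ∈ Finset.Icc 1 m, (1 : ℝ) / k)) ∧
    OPAOptimal m n ≤ 1 / ((n : ℝ) * ∑ k ∈ Finset.Icc 1 m, (1 : ℝ) / k) := by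
  set H : ℝ := ∑ k ∈ Finset.Icc 1 m, (1 : ℝ) / k with hH
  have hHpos : 0 < H := by
    apply Finset.sum_pos
    · intro k hk
      have : 1 ≤ k := (Finset.mem_Icc.mp hk).1
      positivity
    · exact ⟨1, Finset.mem_Icc.mpr ⟨le_refl 1, hm⟩⟩
  have hnH : 0 < (n : ℝ) * H := by
    have : (0 : ℝ) < n := by exact_mod_cast hn
    positivity
  have main : ∀ (Z : ℝ) (w : ℕ → ℕ → ℝ), OPAFeasible m n Z w →
      Z ≤ 1 / ((n : ℝ) * H) := by
    intro Z w hfeas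
    obtain ⟨hpos, hmid, hlast, hsum⟩ := hfeas
    have key : ∀ k ∈ Finset.Icc 1 m,
        (n : ℝ) * Z ≤ (k : ℝ) * ∑ r ∈ Finset.Icc 1 n, w k r := by
      intro k hk
      rw [abel_sum n hn (w k), mul_add, Finset.mul_sum]
      have h1 : ((n : ℝ) - 1) * Z ≤
          ∑ r ∈ Finset.Icc 1 (n - 1), (k : ℝ) * ((r : ℝ) * (w k r - w k (r + 1))) := by
        have h := Finset.card_nsmul_le_sum (Finset.Icc 1 (n - 1))
          (fun r => (k : ℝ) * ((r : ℝ) * (w k r - w k (r + 1)))) Z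
          (fun r hr => by simpa [mul_assoc] using hmid k hk r hr)
        rw [Nat.card_Icc, nsmul_eq_mul] at h
        have hc : ((n - 1 + 1 - 1 : ℕ) : ℝ) = (n : ℝ) - 1 := by
          have : n - 1 + 1 - 1 = n - 1 := by omega
          rw [this, Nat.cast_sub hn, Nat.cast_one]
        rwa [hc] at h
      have h2 : Z ≤ (k : ℝ) * ((n : ℝ) * w k n) := by
        have := hlast k hk
        linarith [this, (mul_assoc (k : ℝ) (n : ℝ) (w k n))]
      linarith
    have step : (n : ℝ) * Z * H ≤ 1 := by
      rw [← hsum, hH, Finset.mul_sum]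
      apply Finset.sum_le_sum
      intro k hk
      have hk1 : 1 ≤ k := (Finset.mem_Icc.mp hk).1
      have hkpos : (0 : ℝ) < k := by exact_mod_cast hk1
      calc (n : ℝ) * Z * (1 / k) ≤ (k : ℝ) * (∑ r ∈ Finset.Icc 1 n, w k r) * (1 / k) := by
            apply mul_le_mul_of_nonneg_right (key k hk) (by positivity)
        _ = ∑ r ∈ Finset.Icc 1 n, w k r := by field_simp
    rw [le_div_iff₀ hnH]
    nlinarith [step]
  exact ⟨main, Real.sSup_le (fun Z hZ => by obtain ⟨w, hw⟩ := hZ; exact main Z w hw)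
    (by positivity)⟩
end

section
/- Let m ≥ 1 and n ≥ 1 be integers, and suppose real numbers Z and w_{k,r} (1 ≤ k ≤ m, 1 ≤ r ≤ n) satisfy all OPA constraints with equality, i.e., k·r·(w_{k,r} − w_{k,r+1}) = Z for all k and all 1 ≤ r ≤ n−1, k·n·w_{k,n} = Z for all k, and Σ_{k=1}^m Σ_{r=1}^n w_{k,r} = 1. Then Z = 1 / (n · Σ_{k=1}^{m} 1/k). -/
lemma opa_abel (f : ℕ → ℝ) (c : ℝ) :
    ∀ n : ℕ, 1 ≤ n →
      c * ∑ r ∈ Finset.Icc 1 n, f r =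
      (∑ r ∈ Finset.Icc 1 (n - 1), c * r * (f r - f (r + 1))) + c * n * f n := by
  intro n
  induction n with
  | zero => intro h; omega
  | succ n ih =>
    intro _
    rcases Nat.eq_zero_or_pos n with hn0 | hn1
    · subst hn0; simp
    · have h1 : (1:ℕ) ≤ n := hn1
      have key := ih h1
      have e2 : (n + 1 : ℕ) - 1 = n := by omega
      have e4 : n - 1 + 1 = n := by omega
      rw [e2, Finset.sum_Icc_succ_top (show 1 ≤ n+1 by omega)]
      conv_rhs => rw [show Finset.Icc 1 n = Finset.Icc 1 (n - 1 + 1) by rw [e4]]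
      rw [Finset.sum_Icc_succ_top (show 1 ≤ n-1+1 by omega)]
      simp only [e4]
      rw [mul_add, key]
      push_cast
      ring

/-- If all OPA constraints are active (hold with equality), then
`Z = 1 / (n · Σ_{k=1}^{m} 1/k)`. -/
theorem opa_active_constraints_value (m n : ℕ) (hm : 1 ≤ m) (hn : 1 ≤ n)
    (Z : ℝ) (w : ℕ → ℕ → ℝ)
    (hstep : ∀ k ∈ Finset.Icc 1 m, ∀ r ∈ Finset.Icc 1 (n - 1),
      (k : ℝ) * r * (w k r - w k (r + 1)) = Z)
    (hlast : ∀ k ∈ Finset.Icc 1 m, (k : ℝ) * n * w k n = Z)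
    (hsum : ∑ k ∈ Finset.Icc 1 m, ∑ r ∈ Finset.Icc 1 n, w k r = 1) :
    Z = 1 / ((n : ℝ) * ∑ k ∈ Finset.Icc 1 m, (1 : ℝ) / k) := by
  have hinner : ∀ k ∈ Finset.Icc 1 m, ∑ r ∈ Finset.Icc 1 n, w k r = (n : ℝ) * Z / k := by
    intro k hk
    have hk1 : (1:ℕ) ≤ k := (Finset.mem_Icc.mp hk).1
    have hkpos : (0:ℝ) < k := by exact_mod_cast hk1
    have habel := opa_abel (w k) (k : ℝ) n hn
    rw [Finset.sum_congr rfl (fun r hr => hstep k hk r hr), hlast k hk,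
      Finset.sum_const] at habel
    have hcard : (Finset.Icc 1 (n-1)).card = n - 1 := by rw [Nat.card_Icc]; omega
    rw [hcard, nsmul_eq_mul, Nat.cast_sub hn] at habel
    rw [eq_div_iff hkpos.ne', mul_comm, habel]
    push_cast
    ring
  rw [Finset.sum_congr rfl hinner] at hsum
  have hden : (0:ℝ) < ∑ k ∈ Finset.Icc 1 m, (1 : ℝ) / k := by
    apply Finset.sum_pos
    · intro k hk
      have hk1 : (1:ℕ) ≤ k := (Finset.mem_Icc.mp hk).1
      have : (0:ℝ) < k := by exact_mod_cast hk1
      positivity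
    · exact ⟨1, Finset.mem_Icc.mpr ⟨le_refl 1, hm⟩⟩
  have hnpos : (0:ℝ) < n := by exact_mod_cast hn
  have hrw : ∑ k ∈ Finset.Icc 1 m, (n : ℝ) * Z / k
      = Z * ((n:ℝ) * ∑ k ∈ Finset.Icc 1 m, (1:ℝ) / k) := by
    rw [Finset.mul_sum, Finset.mul_sum]
    apply Finset.sum_congr rfl
    intro k _; ring
  rw [hrw] at hsum
  field_simp
  linarith [hsum]
end

section
/- Let m ≥ 1 and n ≥ 1 be integers. Define Z = 1 / (n · Σ_{k=1}^{m} 1/k) and w_{k,r} = (Z/k) · Σ_{h=r}^{n} (1/h) for 1 ≤ k ≤ m, 1 ≤ r ≤ n. Then (Z, w) is a feasible point of the OPA linear program: all w_{k,r} ≥ 0, all ordering constraints hold (with equality), and Σ_{k=1}^m Σ_{r=1}^n w_{k,r} = 1. -/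
open Finset

lemma sum_Icc_one_sum_Icc_eq_sum_nsmul {M : Type*} [AddCommMonoid M] (f : ℕ → M) (n : ℕ) :
    ∑ r ∈ Icc 1 n, ∑ h ∈ Icc r n, f h = ∑ h ∈ Icc 1 n, h • f h := by
  rw [sum_comm' (t' := Icc 1 n) (s' := fun h => Icc 1 h)]
  · refine sum_congr rfl fun h _ => ?_
    rw [sum_const, Nat.card_Icc, Nat.add_sub_cancel]
  · intro r h
    simp only [mem_Icc]
    omega

lemma sum_Icc_one_sum_Icc_one_div (n : ℕ) :
    ∑ r ∈ Icc 1 n, ∑ h ∈ Icc r n, (1 : ℝ) / h = n := by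
  rw [sum_Icc_one_sum_Icc_eq_sum_nsmul]
  calc ∑ h ∈ Icc 1 n, h • ((1 : ℝ) / h) = ∑ _h ∈ Icc 1 n, (1 : ℝ) := by
        refine sum_congr rfl fun h hh => ?_
        have : (h : ℝ) ≠ 0 := Nat.cast_ne_zero.mpr (Nat.one_le_iff_ne_zero.mp (mem_Icc.mp hh).1)
        rw [nsmul_eq_mul, mul_one_div_cancel this]
    _ = n := by simp

lemma sum_Icc_one_one_div_pos {m : ℕ} (hm : 1 ≤ m) : 0 < ∑ k ∈ Icc 1 m, (1 : ℝ) / k :=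
  sum_pos (fun k hk => by have := (mem_Icc.mp hk).1; positivity) ⟨1, mem_Icc.mpr ⟨le_rfl, hm⟩⟩

lemma mul_mul_sub_div_mul_sum_Icc_one_div (Z : ℝ) {k r n : ℕ} (hk : 1 ≤ k) (hr : 1 ≤ r)
    (hrn : r ≤ n) :
    (k : ℝ) * r * (Z / k * ∑ h ∈ Icc r n, (1 : ℝ) / h - Z / k * ∑ h ∈ Icc (r + 1) n, (1 : ℝ) / h)
      = Z := by
  have hk₀ : (k : ℝ) ≠ 0 := Nat.cast_ne_zero.mpr (by omega)
  have hr₀ : (r : ℝ) ≠ 0 := Nat.cast_ne_zero.mpr (by omega)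
  rw [← add_sum_Ioc_eq_sum_Icc hrn, ← Icc_add_one_left_eq_Ioc]
  field_simp
  ring

lemma mul_mul_div_mul_sum_Icc_self_one_div (Z : ℝ) {k n : ℕ} (hk : 1 ≤ k) (hn : 1 ≤ n) :
    (k : ℝ) * n * (Z / k * ∑ h ∈ Icc n n, (1 : ℝ) / h) = Z := by
  have hk₀ : (k : ℝ) ≠ 0 := Nat.cast_ne_zero.mpr (by omega)
  have hn₀ : (n : ℝ) ≠ 0 := Nat.cast_ne_zero.mpr (by omega)
  rw [Icc_self, sum_singleton]
  field_simp

lemma sum_Icc_one_sum_Icc_one_div_mul_sum_Icc_one_div (Z : ℝ) (m n : ℕ) :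
    ∑ k ∈ Icc 1 m, ∑ r ∈ Icc 1 n, Z / k * ∑ h ∈ Icc r n, (1 : ℝ) / h
      = Z * n * ∑ k ∈ Icc 1 m, (1 : ℝ) / k := by
  simp only [← mul_sum, sum_Icc_one_sum_Icc_one_div]
  rw [mul_sum]
  refine sum_congr rfl fun k _ => ?_
  ring

/-- The point `Z = 1/(n * Σ_{k=1}^m 1/k)`, `w k r = (Z/k) * Σ_{h=r}^n 1/h` is feasible
for the OPA linear program, and all ordering constraints hold with equality. -/
theorem opa_candidate_feasible (m n : ℕ) (hm : 1 ≤ m) (hn : 1 ≤ n) :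
    OPAFeasible m n (1 / ((n : ℝ) * ∑ k ∈ Finset.Icc 1 m, (1 : ℝ) / k))
      (fun k r => (1 / ((n : ℝ) * ∑ j ∈ Finset.Icc 1 m, (1 : ℝ) / j)) / (k : ℝ) *
        ∑ h ∈ Finset.Icc r n, (1 : ℝ) / h) ∧
    (∀ k ∈ Finset.Icc 1 m, ∀ r ∈ Finset.Icc 1 (n - 1),
      (k : ℝ) * r *
        ((1 / ((n : ℝ) * ∑ j ∈ Finset.Icc 1 m, (1 : ℝ) / j)) / (k : ℝ) *
            ∑ h ∈ Finset.Icc r n, (1 : ℝ) / h -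
          (1 / ((n : ℝ) * ∑ j ∈ Finset.Icc 1 m, (1 : ℝ) / j)) / (k : ℝ) *
            ∑ h ∈ Finset.Icc (r + 1) n, (1 : ℝ) / h) =
        1 / ((n : ℝ) * ∑ j ∈ Finset.Icc 1 m, (1 : ℝ) / j)) ∧
    (∀ k ∈ Finset.Icc 1 m,
      (k : ℝ) * n *
        ((1 / ((n : ℝ) * ∑ j ∈ Finset.Icc 1 m, (1 : ℝ) / j)) / (k : ℝ) *
          ∑ h ∈ Finset.Icc n n, (1 : ℝ) / h) =
        1 / ((n : ℝ) * ∑ j ∈ Finset.Icc 1 m, (1 : ℝ) / j)) := by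
  set Z := 1 / ((n : ℝ) * ∑ j ∈ Icc 1 m, (1 : ℝ) / j) with hZ
  have hnH : (n : ℝ) * ∑ j ∈ Icc 1 m, (1 : ℝ) / j ≠ 0 :=
    mul_ne_zero (Nat.cast_ne_zero.mpr (by omega)) (sum_Icc_one_one_div_pos hm).ne'
  have gap : ∀ k ∈ Icc 1 m, ∀ r ∈ Icc 1 (n - 1),
      (k : ℝ) * r * (Z / k * ∑ h ∈ Icc r n, (1 : ℝ) / h
        - Z / k * ∑ h ∈ Icc (r + 1) n, (1 : ℝ) / h) = Z := fun k hk r hr => by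
    obtain ⟨hr₁, hrn⟩ := mem_Icc.mp hr
    exact mul_mul_sub_div_mul_sum_Icc_one_div Z (mem_Icc.mp hk).1 hr₁ (by omega)
  have last : ∀ k ∈ Icc 1 m, (k : ℝ) * n * (Z / k * ∑ h ∈ Icc n n, (1 : ℝ) / h) = Z :=
    fun k hk => mul_mul_div_mul_sum_Icc_self_one_div Z (mem_Icc.mp hk).1 hn
  have nonneg : ∀ k ∈ Icc 1 m, ∀ r ∈ Icc 1 n, 0 ≤ Z / k * ∑ h ∈ Icc r n, (1 : ℝ) / h :=
    fun k _ r _ => by positivity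
  have total : ∑ k ∈ Icc 1 m, ∑ r ∈ Icc 1 n, Z / k * ∑ h ∈ Icc r n, (1 : ℝ) / h = 1 := by
    rw [sum_Icc_one_sum_Icc_one_div_mul_sum_Icc_one_div, hZ, mul_assoc, one_div_mul_cancel hnH]
  exact ⟨⟨nonneg, fun k hk r hr => (gap k hk r hr).ge, fun k hk => (last k hk).ge, total⟩,
    gap, last⟩
end

section
/- Let m ≥ 1 and n ≥ 1 be integers. The optimal value of the OPA linear program is exactly Z* = 1 / (n · Σ_{k=1}^{m} 1/k), and this value is attained by the feasible point w_{k,r} = (Z*/k) · Σ_{h=r}^{n} (1/h). -/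
/-!
Each expert's constraints telescope: if `k r (w k r - w k (r+1)) ≥ Z` and `k n w k n ≥ Z`, then
`w k r ≥ (Z/k) Σ_{h=r}^n 1/h`, with equality exactly at the proposed point. Since
`Σ_{r=1}^n Σ_{h=r}^n 1/h = n`, summing over all experts turns the normalization into
`Z · n · Σ_k 1/k ≤ 1`, and the proposed point attains this bound.
-/

open Finset

noncomputable def tailHarmonic (r n : ℕ) : ℝ := ∑ h ∈ Icc r n, (1 : ℝ) / h

lemma tailHarmonic_nonneg (r n : ℕ) : 0 ≤ tailHarmonic r n :=
  sum_nonneg fun _ _ => by positivity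

lemma tailHarmonic_self (n : ℕ) : tailHarmonic n n = 1 / n := by
  simp [tailHarmonic]

lemma tailHarmonic_eq_add {r n : ℕ} (h : r ≤ n) :
    tailHarmonic r n = 1 / r + tailHarmonic (r + 1) n := by
  rw [tailHarmonic, tailHarmonic, ← add_sum_Ioc_eq_sum_Icc h, Icc_add_one_left_eq_Ioc]

lemma sum_tailHarmonic (n : ℕ) : ∑ r ∈ Icc 1 n, tailHarmonic r n = n := by
  -- The term `1/h` occurs once for each `r ∈ [1, h]`.
  have hswap : ∑ r ∈ Icc 1 n, tailHarmonic r n = ∑ h ∈ Icc 1 n, ∑ _r ∈ Icc 1 h, (1 : ℝ) / h :=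
    sum_comm' fun r h => by simp only [mem_Icc]; omega
  calc ∑ r ∈ Icc 1 n, tailHarmonic r n = ∑ _h ∈ Icc 1 n, (1 : ℝ) := by
        rw [hswap]
        refine sum_congr rfl fun h hh => ?_
        have : (h : ℝ) ≠ 0 := by have := (mem_Icc.1 hh).1; positivity
        simp [this]
    _ = n := by simp

lemma mul_tailHarmonic_le {n : ℕ} {a : ℝ} {x : ℕ → ℝ}
    (hstep : ∀ r ∈ Icc 1 (n - 1), a ≤ r * (x r - x (r + 1))) (hlast : a ≤ n * x n)
    {r : ℕ} (hr : r ∈ Icc 1 n) : a * tailHarmonic r n ≤ x r := by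
  obtain ⟨hr1, hrn⟩ := mem_Icc.1 hr
  clear hr
  induction hrn using Nat.decreasingInduction with
  | self =>
    have hn : (0 : ℝ) < n := by exact_mod_cast hr1
    rwa [tailHarmonic_self, mul_one_div, div_le_iff₀' hn]
  | of_succ r hrn ih =>
    have hr : (0 : ℝ) < r := by exact_mod_cast hr1
    have hdiff : a / r ≤ x r - x (r + 1) :=
      (div_le_iff₀' hr).2 (hstep r (mem_Icc.2 ⟨hr1, by omega⟩))
    rw [tailHarmonic_eq_add hrn.le, mul_add, mul_one_div]
    linarith [ih (by omega)]

lemma OPAFeasible.div_mul_le_sum {m n : ℕ} {Z : ℝ} {w : ℕ → ℕ → ℝ} (hw : OPAFeasible m n Z w)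
    {k : ℕ} (hk : k ∈ Icc 1 m) : Z / k * n ≤ ∑ r ∈ Icc 1 n, w k r := by
  obtain ⟨-, hstep, hlast, -⟩ := hw
  have hk0 : (0 : ℝ) < k := by exact_mod_cast (mem_Icc.1 hk).1
  calc Z / k * n = ∑ r ∈ Icc 1 n, Z / k * tailHarmonic r n := by
        rw [← mul_sum, sum_tailHarmonic]
    _ ≤ ∑ r ∈ Icc 1 n, w k r := by
        refine sum_le_sum fun r hr => mul_tailHarmonic_le (fun r hr => ?_) ?_ hr
        · rw [div_le_iff₀' hk0, ← mul_assoc]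
          exact hstep k hk r hr
        · rw [div_le_iff₀' hk0, ← mul_assoc]
          exact hlast k hk

lemma sum_div_mul_eq (m n : ℕ) (Z : ℝ) :
    ∑ k ∈ Icc 1 m, Z / k * n = Z * (n * ∑ k ∈ Icc 1 m, (1 : ℝ) / k) := by
  rw [mul_sum, mul_sum]
  exact sum_congr rfl fun k _ => by ring

lemma OPAFeasible.mul_le_one {m n : ℕ} {Z : ℝ} {w : ℕ → ℕ → ℝ} (hw : OPAFeasible m n Z w) :
    Z * (n * ∑ k ∈ Icc 1 m, (1 : ℝ) / k) ≤ 1 := by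
  rw [← sum_div_mul_eq, ← hw.2.2.2]
  exact sum_le_sum fun k hk => hw.div_mul_le_sum hk

lemma opaFeasible_tailHarmonic {m n : ℕ} (hn : 1 ≤ n) {Z : ℝ} (hZ : 0 ≤ Z)
    (hnorm : Z * (n * ∑ k ∈ Icc 1 m, (1 : ℝ) / k) = 1) :
    OPAFeasible m n Z (fun k r => Z / k * tailHarmonic r n) := by
  have hk0 {k : ℕ} (hk : k ∈ Icc 1 m) : (k : ℝ) ≠ 0 := by
    have := (mem_Icc.1 hk).1; positivity
  refine ⟨fun k _ r _ => ?_, fun k hk r hr => ?_, fun k hk => ?_, ?_⟩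
  · exact mul_nonneg (by positivity) (tailHarmonic_nonneg r n)
  · have hr0 : (r : ℝ) ≠ 0 := by have := (mem_Icc.1 hr).1; positivity
    refine ge_of_eq ?_
    dsimp only
    rw [tailHarmonic_eq_add (by have := (mem_Icc.1 hr).2; omega)]
    field_simp [hk0 hk]
    ring
  · have hn0 : (n : ℝ) ≠ 0 := by positivity
    refine ge_of_eq ?_
    dsimp only
    rw [tailHarmonic_self]
    field_simp [hk0 hk]
  · simp_rw [← mul_sum, sum_tailHarmonic]
    rw [sum_div_mul_eq, hnorm]

/-- The optimal value of the OPA linear program is exactly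
`Z* = 1/(n * Σ_{k=1}^m 1/k)`, attained at `w k r = (Z*/k) * Σ_{h=r}^n 1/h`. -/
theorem opa_optimal_value (m n : ℕ) (hm : 1 ≤ m) (hn : 1 ≤ n) :
    OPAOptimal m n = 1 / ((n : ℝ) * ∑ k ∈ Finset.Icc 1 m, (1 : ℝ) / k) ∧
    IsGreatest {Z : ℝ | ∃ w : ℕ → ℕ → ℝ, OPAFeasible m n Z w}
      (1 / ((n : ℝ) * ∑ k ∈ Finset.Icc 1 m, (1 : ℝ) / k)) ∧
    OPAFeasible m n (1 / ((n : ℝ) * ∑ k ∈ Finset.Icc 1 m, (1 : ℝ) / k))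
      (fun k r => (1 / ((n : ℝ) * ∑ j ∈ Finset.Icc 1 m, (1 : ℝ) / j)) / (k : ℝ) *
        ∑ h ∈ Finset.Icc r n, (1 : ℝ) / h) := by
  have hS : 0 < ∑ k ∈ Icc 1 m, (1 : ℝ) / k :=
    sum_pos (fun k hk => by have := (mem_Icc.1 hk).1; positivity) ⟨1, mem_Icc.2 ⟨le_rfl, hm⟩⟩
  have hnS : 0 < (n : ℝ) * ∑ k ∈ Icc 1 m, (1 : ℝ) / k := by positivity
  have hfeas := opaFeasible_tailHarmonic hn (one_div_pos.2 hnS).le (one_div_mul_cancel hnS.ne')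
  have hgreatest : IsGreatest {Z : ℝ | ∃ w : ℕ → ℕ → ℝ, OPAFeasible m n Z w}
      (1 / ((n : ℝ) * ∑ k ∈ Icc 1 m, (1 : ℝ) / k)) :=
    ⟨⟨_, hfeas⟩, fun _ ⟨_, hw⟩ => (le_div_iff₀ hnS).2 hw.mul_le_one⟩
  exact ⟨hgreatest.csSup_eq, hgreatest, hfeas⟩
end
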